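/- Let B be a graph in 𝓑_1 with root vertex v_1 (of degree 1 in B), let w_2 be a vertex of degree 2 in B different from v_1, and let T be the graph obtained from B by adding a new vertex v_2 together with the two edges v_1 v_2 and v_2 w_2. Then there exists an independent dominating set of T of minimum cardinality i(T) that contains the vertex v_2. -/

import Mathlib

namespace PaperIndepDom

open SimpleGraph

/-- The degree of a vertex `v` in a graph `G`. -/
noncomputable def deg {V : Type*} (G : SimpleGraph V) (v : V) : ℕ :=
  (G.neighborSet v).ncard

/-- A set `S` is an independent dominating set of `G`. -/
def IsIDSet {V : Type*} (G : SimpleGraph V) (S : Set V) : Prop :=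
  (∀ u ∈ S, ∀ v ∈ S, ¬ G.Adj u v) ∧ ∀ v, v ∉ S → ∃ u ∈ S, G.Adj u v

/-- The independent domination number `i(G)`. -/
noncomputable def iNum {V : Type*} (G : SimpleGraph V) : ℕ :=
  sInf {n | ∃ S : Set V, IsIDSet G S ∧ S.ncard = n}

/-- The base graph `B₁`: a copy of `K_{2,3}` (vertices `0, 1` forming the partite set of
size 2, vertices `2, 3, 4` forming the partite set of size 3) together with a new root
vertex `5` joined to the degree-2 vertex `2`. -/
def baseGraph : SimpleGraph (Fin 6) :=
  SimpleGraph.fromRel (fun i j =>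
    (i.val ≤ 1 ∧ 2 ≤ j.val ∧ j.val ≤ 4) ∨ (i = 2 ∧ j = 5))

/-- The graph obtained from `G` by adding a vertex-disjoint copy of `K_{2,3}`
(on the vertex set `Fin 2 ⊕ Fin 3`) together with an edge joining the vertex `v'` of `G`
to the degree-2 vertex `Sum.inr t` of the added copy of `K_{2,3}` (operation `O₁`). -/
def addK23 {V : Type*} (G : SimpleGraph V) (v' : V) (t : Fin 3) :
    SimpleGraph (V ⊕ (Fin 2 ⊕ Fin 3)) :=
  SimpleGraph.fromRel (fun x y =>
    (∃ a b, G.Adj a b ∧ x = Sum.inl a ∧ y = Sum.inl b) ∨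
    (∃ i j, x = Sum.inr (Sum.inl i) ∧ y = Sum.inr (Sum.inr j)) ∨
    (x = Sum.inl v' ∧ y = Sum.inr (Sum.inr t)))

/-- `FamilyBRoot G r` means that `G` belongs to the family `𝓑` (the smallest family of
graphs, closed under isomorphism, containing the base graph and closed under the
operation `O₁`) and `r` is the root of `G`. -/
inductive FamilyBRoot : ∀ {V : Type}, SimpleGraph V → V → Prop
  | base : FamilyBRoot baseGraph 5
  | extend {V : Type} {G : SimpleGraph V} {r : V} (hG : FamilyBRoot G r) (v' : V)
      (hv' : deg G v' ≤ 2) (t : Fin 3) : FamilyBRoot (addK23 G v' t) (Sum.inl r)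
  | iso {V W : Type} {G : SimpleGraph V} {H : SimpleGraph W} {r : V}
      (e : G ≃g H) (hG : FamilyBRoot G r) : FamilyBRoot H (e r)

/-- The graph obtained from `B` by adding a new vertex `v₂` (namely `Sum.inr ()`)
together with the two edges `v₁v₂` and `v₂w₂`. -/
def addLink {V : Type*} (B : SimpleGraph V) (v1 w2 : V) : SimpleGraph (V ⊕ Unit) :=
  SimpleGraph.fromRel (fun x y =>
    (∃ a b, B.Adj a b ∧ x = Sum.inl a ∧ y = Sum.inl b) ∨
    (x = Sum.inl v1 ∧ y = Sum.inr ()) ∨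
    (x = Sum.inl w2 ∧ y = Sum.inr ()))


/-!
Let `B` be built from `k` copies of `K_{2,3}`. Two bounds hold for `B` (`IDSBounds`):
if `J` is independent and dominates every vertex outside a set `S` of vertices of degree at
most 2, then `|J| + |S| ≥ 2k + 1`; and for every vertex `v` of degree at most 2 some independent
set of size at most `2k` avoids the root and `v` and dominates all other vertices. Both bounds
pass through `O₁`, each new copy of `K_{2,3}` costing two more vertices, and the base graph is
`O₁` applied to a single vertex. The exempt set `S` is what makes the lower bound inductive:
after `O₁` the attachment vertex may be dominated only by the new copy, and it is then charged
to `S` in the smaller graph.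

In `T`, an independent dominating set avoiding `v₂` is one of `B`, so it has at least `2k + 1`
vertices, while one containing `v₂` is `v₂` together with an independent set of `B` avoiding
`v₁, w₂` and dominating the rest. The smallest such set has at most `2k` vertices (take
`v = w₂`), so adding `v₂` to it gives a minimum independent dominating set of `T`.
-/

open Set Sum

section adjacency

variable {V : Type*} {G B : SimpleGraph V} {v' v1 w2 a b : V} {t : Fin 3}
  {z z' : Fin 2 ⊕ Fin 3} {u u' : Unit}

@[simp] lemma addK23_adj_inl_inl : (addK23 G v' t).Adj (inl a) (inl b) ↔ G.Adj a b := by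
  simp [addK23, G.adj_comm b a]
  exact G.ne_of_adj

@[simp] lemma addK23_adj_inl_inr : (addK23 G v' t).Adj (inl a) (inr z) ↔ a = v' ∧ z = inr t := by
  simp [addK23]

@[simp] lemma addK23_adj_inr_inl : (addK23 G v' t).Adj (inr z) (inl a) ↔ a = v' ∧ z = inr t := by
  rw [adj_comm, addK23_adj_inl_inr]

@[simp] lemma addK23_adj_inr_inr :
    (addK23 G v' t).Adj (inr z) (inr z') ↔ (completeBipartiteGraph (Fin 2) (Fin 3)).Adj z z' := by
  rcases z with i | j <;> rcases z' with i' | j' <;> simp [addK23] <;> omega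

@[simp] lemma addLink_adj_inl_inl : (addLink B v1 w2).Adj (inl a) (inl b) ↔ B.Adj a b := by
  simp [addLink, B.adj_comm b a]
  exact B.ne_of_adj

@[simp] lemma addLink_adj_inl_inr : (addLink B v1 w2).Adj (inl a) (inr u) ↔ a = v1 ∨ a = w2 := by
  simp [addLink]

@[simp] lemma addLink_adj_inr_inl : (addLink B v1 w2).Adj (inr u) (inl a) ↔ a = v1 ∨ a = w2 := by
  rw [adj_comm, addLink_adj_inl_inr]

@[simp] lemma addLink_not_adj_inr_inr : ¬ (addLink B v1 w2).Adj (inr u) (inr u') := by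
  simp [addLink]

end adjacency

def IsIDSetExcept {V : Type*} (G : SimpleGraph V) (X S : Set V) : Prop :=
  (∀ u ∈ S, ∀ v ∈ S, ¬ G.Adj u v) ∧ ∀ v, v ∉ X → v ∉ S → ∃ u ∈ S, G.Adj u v

section general

variable {V W : Type*} {G : SimpleGraph V} {H : SimpleGraph W}

lemma IsIDSet.isIDSetExcept_empty {S : Set V} (h : IsIDSet G S) : IsIDSetExcept G ∅ S :=
  ⟨h.1, fun v _ hv => h.2 v hv⟩

lemma ncard_eq_iNum_of_forall_le {I : Set V} (hI : IsIDSet G I)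
    (hmin : ∀ K, IsIDSet G K → I.ncard ≤ K.ncard) : I.ncard = iNum G :=
  le_antisymm (le_csInf ⟨_, I, hI, rfl⟩ (by rintro _ ⟨K, hK, rfl⟩; exact hmin K hK))
    (Nat.sInf_le ⟨I, hI, rfl⟩)

lemma ncard_le_deg [Finite V] {v : V} {s : Set V} (h : s ⊆ G.neighborSet v) :
    s.ncard ≤ deg G v :=
  ncard_le_ncard h

lemma Iso.deg_eq (e : G ≃g H) (v : V) : deg H (e v) = deg G v := by
  rw [deg, deg, ← ncard_preimage_of_injective_subset_range e.injective
    (by rw [e.surjective.range_eq]; exact subset_univ _)]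
  congr 1
  ext w
  exact e.map_adj_iff

lemma IsIDSetExcept.comap (e : G ≃g H) {X S : Set W} (h : IsIDSetExcept H X S) :
    IsIDSetExcept G (e ⁻¹' X) (e ⁻¹' S) := by
  obtain ⟨hindep, hdom⟩ := h
  refine ⟨fun u hu v hv huv => hindep _ hu _ hv (e.map_adj_iff.mpr huv), fun v hvX hvS => ?_⟩
  obtain ⟨u, hu, huv⟩ := hdom (e v) hvX hvS
  exact ⟨e.symm u, by simpa using hu, e.map_adj_iff.mp (by rwa [e.apply_symm_apply])⟩

end general

lemma ncard_eq_ncard_preimage_inl_add {α β : Type*} [Finite α] [Finite β] (A : Set (α ⊕ β)) :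
    A.ncard = (inl ⁻¹' A).ncard + (inr ⁻¹' A).ncard := by
  conv_lhs => rw [← image_preimage_inl_union_image_preimage_inr A]
  rw [ncard_union_eq (disjoint_image_inl_image_inr), ncard_image_of_injective _ inl_injective,
    ncard_image_of_injective _ inr_injective]

section completeBipartite

variable {α β : Type*} {J S : Set (α ⊕ β)} {t : β}

lemma inr_mem_union_of_forall_inl_notMem
    (h : IsIDSetExcept (completeBipartiteGraph α β) (insert (inr t) S) J)
    (hJ : ∀ a, inl a ∉ J) {b : β} (hb : b ≠ t) : inr b ∈ J ∪ S := by
  by_contra hbJS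
  simp only [mem_union, not_or] at hbJS
  obtain ⟨a | b', hu, hadj⟩ := h.2 (inr b) (by simp [hb, hbJS.2]) hbJS.1
  · exact hJ a hu
  · simp at hadj

variable [Finite α] [Finite β]

lemma card_le_ncard_add_of_inr_mem
    (h : IsIDSetExcept (completeBipartiteGraph α β) (insert (inr t) S) J) (ht : inr t ∈ J) :
    Nat.card β ≤ J.ncard + S.ncard := by
  have hJ : ∀ a, inl a ∉ J := fun a ha => h.1 _ ha _ ht (by simp)
  have hsub : range (inr : β → α ⊕ β) ⊆ J ∪ S := by
    rintro _ ⟨b, rfl⟩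
    rcases eq_or_ne b t with rfl | hb
    exacts [Or.inl ht, inr_mem_union_of_forall_inl_notMem h hJ hb]
  calc Nat.card β = (range (inr : β → α ⊕ β)).ncard := (ncard_range_of_injective inr_injective).symm
    _ ≤ (J ∪ S).ncard := ncard_le_ncard hsub
    _ ≤ J.ncard + S.ncard := ncard_union_le J S

lemma min_card_le_ncard_add
    (h : IsIDSetExcept (completeBipartiteGraph α β) (insert (inr t) S) J)
    (hS : ∀ a, inl a ∉ S) : min (Nat.card α) (Nat.card β - 1) ≤ J.ncard + S.ncard := by
  by_cases hJ : ∃ a, inl a ∈ J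
  · obtain ⟨a, ha⟩ := hJ
    have hsub : range (inl : α → α ⊕ β) ⊆ J := by
      rintro _ ⟨a', rfl⟩
      by_contra ha'
      obtain ⟨a'' | b, hu, hadj⟩ := h.2 (inl a') (by simp [hS a']) ha'
      · simp at hadj
      · exact h.1 _ ha _ hu (by simp)
    calc min (Nat.card α) (Nat.card β - 1) ≤ Nat.card α := min_le_left _ _
      _ = (range (inl : α → α ⊕ β)).ncard := (ncard_range_of_injective inl_injective).symm
      _ ≤ J.ncard := ncard_le_ncard hsub
      _ ≤ J.ncard + S.ncard := Nat.le_add_right _ _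
  · rw [not_exists] at hJ
    have hsub : inr '' {t}ᶜ ⊆ J ∪ S := by
      rintro _ ⟨b, hb, rfl⟩
      exact inr_mem_union_of_forall_inl_notMem h hJ hb
    calc min (Nat.card α) (Nat.card β - 1) ≤ Nat.card β - 1 := min_le_right _ _
      _ = (inr '' {t}ᶜ : Set (α ⊕ β)).ncard := by
        rw [ncard_image_of_injective _ inr_injective, ncard_compl, ncard_singleton]
      _ ≤ (J ∪ S).ncard := ncard_le_ncard hsub
      _ ≤ J.ncard + S.ncard := ncard_union_le J S

end completeBipartite

section addK23

variable {V : Type*} [Finite V] {G : SimpleGraph V} {v' : V} {t : Fin 3}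

lemma deg_le_deg_addK23_inl (a : V) : deg G a ≤ deg (addK23 G v' t) (inl a) := by
  rw [deg, ← ncard_image_of_injective _ inl_injective]
  exact ncard_le_deg (by rintro _ ⟨b, hb, rfl⟩; simpa using hb)

lemma three_le_deg_addK23_inr_inl (i : Fin 2) : 3 ≤ deg (addK23 G v' t) (inr (inl i)) :=
  calc 3 = ({inr (inr 0), inr (inr 1), inr (inr 2)} : Set (V ⊕ (Fin 2 ⊕ Fin 3))).ncard :=
        (ncard_eq_three.mpr ⟨_, _, _, by simp, by simp, by simp, rfl⟩).symm
    _ ≤ _ := ncard_le_deg (by rintro _ (rfl | rfl | rfl) <;> simp)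

lemma three_le_deg_addK23_inr_inr_self : 3 ≤ deg (addK23 G v' t) (inr (inr t)) :=
  calc 3 = ({inl v', inr (inl 0), inr (inl 1)} : Set (V ⊕ (Fin 2 ⊕ Fin 3))).ncard :=
        (ncard_eq_three.mpr ⟨_, _, _, by simp, by simp, by simp, rfl⟩).symm
    _ ≤ _ := ncard_le_deg (by rintro _ (rfl | rfl | rfl) <;> simp)

end addK23

namespace IsIDSetExcept

variable {V : Type*} {G : SimpleGraph V} {v' : V} {t : Fin 3}

lemma preimage_inl_of_addK23 {S J : Set (V ⊕ (Fin 2 ⊕ Fin 3))}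
    (h : IsIDSetExcept (addK23 G v' t) S J) (ht : inr (inr t) ∉ J) :
    IsIDSetExcept G (inl ⁻¹' S) (inl ⁻¹' J) := by
  refine ⟨fun u hu v hv huv => h.1 _ hu _ hv (by simpa), fun z hzS hzJ => ?_⟩
  obtain ⟨a | w, hu, hadj⟩ := h.2 (inl z) hzS hzJ
  · exact ⟨a, hu, by simpa using hadj⟩
  · obtain ⟨-, rfl⟩ := addK23_adj_inr_inl.mp hadj
    exact absurd hu ht

lemma insert_preimage_inl_of_addK23 {S J : Set (V ⊕ (Fin 2 ⊕ Fin 3))}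
    (h : IsIDSetExcept (addK23 G v' t) S J) :
    IsIDSetExcept G (insert v' (inl ⁻¹' S)) (inl ⁻¹' J) := by
  refine ⟨fun u hu v hv huv => h.1 _ hu _ hv (by simpa), fun z hzS hzJ => ?_⟩
  rw [mem_insert_iff, not_or] at hzS
  obtain ⟨a | w, hu, hadj⟩ := h.2 (inl z) hzS.2 hzJ
  · exact ⟨a, hu, by simpa using hadj⟩
  · exact absurd (addK23_adj_inr_inl.mp hadj).1 hzS.1

lemma preimage_inr_of_addK23 {S J : Set (V ⊕ (Fin 2 ⊕ Fin 3))}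
    (h : IsIDSetExcept (addK23 G v' t) S J) :
    IsIDSetExcept (completeBipartiteGraph (Fin 2) (Fin 3)) (insert (inr t) (inr ⁻¹' S))
      (inr ⁻¹' J) := by
  refine ⟨fun u hu v hv huv => h.1 _ hu _ hv (by simpa), fun z hzS hzJ => ?_⟩
  rw [mem_insert_iff, not_or] at hzS
  obtain ⟨a | w, hu, hadj⟩ := h.2 (inr z) hzS.2 hzJ
  · exact absurd (addK23_adj_inl_inr.mp hadj).2 hzS.1
  · exact ⟨w, hu, by simpa using hadj⟩

lemma addK23_image_inl_union_range {X J : Set V} (h : IsIDSetExcept G X J) :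
    IsIDSetExcept (addK23 G v' t) (inl '' X) (inl '' J ∪ range (inr ∘ inl)) := by
  constructor
  · rintro (x | i | j) hx (y | i' | j') hy hadj
    · exact h.1 x (by simpa using hx) y (by simpa using hy) (by simpa using hadj)
    all_goals simp_all
  · rintro (b | i | j) hbX hbJ
    · obtain ⟨u, hu, hadj⟩ := h.2 b (by simpa using hbX) (by simpa using hbJ)
      exact ⟨inl u, by simpa using hu, by simpa using hadj⟩
    · simp at hbJ
    · exact ⟨inr (inl 0), by simp, by simp⟩

lemma addK23_image_inl_union_image {X J : Set V} (h : IsIDSetExcept G (insert v' X) J) (hv' : v' ∉ J)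
    {j : Fin 3} (hj : j ≠ t) :
    IsIDSetExcept (addK23 G v' t) (insert (inr (inr j)) (inl '' X))
      (inl '' J ∪ (inr ∘ inr) '' {j}ᶜ) := by
  constructor
  · rintro (x | i | c) hx (y | i' | c') hy hadj
    · exact h.1 x (by simpa using hx) y (by simpa using hy) (by simpa using hadj)
    all_goals aesop
  · rintro (b | i | c) hbX hbJ
    · rcases eq_or_ne b v' with rfl | hb
      · exact ⟨inr (inr t), by simp [hj.symm], by simp⟩
      · obtain ⟨u, hu, hadj⟩ := h.2 b (by simp_all) (by simpa using hbJ)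
        exact ⟨inl u, by simpa using hu, by simpa using hadj⟩
    · exact ⟨inr (inr t), by simp [hj.symm], by simp⟩
    · simp_all

end IsIDSetExcept

structure IDSBounds {V : Type*} (G : SimpleGraph V) (r : V) (k : ℕ) : Prop where
  finite : Finite V
  le_ncard_add_ncard : ∀ S J : Set V, (∀ v ∈ S, deg G v ≤ 2) → IsIDSetExcept G S J →
    2 * k + 1 ≤ J.ncard + S.ncard
  exists_ncard_le : ∀ v, deg G v ≤ 2 →
    ∃ J : Set V, IsIDSetExcept G {r, v} J ∧ r ∉ J ∧ v ∉ J ∧ J.ncard ≤ 2 * k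

namespace IDSBounds

lemma bot_unit : IDSBounds (⊥ : SimpleGraph Unit) () 0 where
  finite := inferInstance
  le_ncard_add_ncard S J _ h := by
    have hmem : () ∈ J ∪ S := by
      by_contra hJS
      simp only [mem_union, not_or] at hJS
      obtain ⟨_, -, hadj⟩ := h.2 () hJS.2 hJS.1
      exact hadj
    exact (ncard_pos (toFinite _)).mpr ⟨_, hmem⟩ |>.trans_le (ncard_union_le J S)
  exists_ncard_le _ _ := ⟨∅, ⟨by simp, by simp⟩, by simp, by simp, by simp⟩

variable {V : Type*} {G : SimpleGraph V} {r : V} {k : ℕ}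

lemma map {W : Type*} {H : SimpleGraph W} (e : G ≃g H) (hG : IDSBounds G r k) :
    IDSBounds H (e r) k where
  finite := have := hG.finite; Finite.of_equiv V e.toEquiv
  le_ncard_add_ncard S J hS h := by
    have hinj := e.injective
    have hrange : ∀ A : Set W, A ⊆ range e := fun A => by
      rw [e.surjective.range_eq]; exact subset_univ A
    have := hG.le_ncard_add_ncard (e ⁻¹' S) (e ⁻¹' J)
      (fun v hv => (Iso.deg_eq e v).symm.trans_le (hS _ hv)) (h.comap e)
    rwa [ncard_preimage_of_injective_subset_range hinj (hrange _),
      ncard_preimage_of_injective_subset_range hinj (hrange _)] at this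
  exists_ncard_le w hw := by
    obtain ⟨J, hJ, hrJ, hwJ, hcard⟩ :=
      hG.exists_ncard_le (e.symm w) (by rwa [← Iso.deg_eq e, e.apply_symm_apply])
    refine ⟨e.symm ⁻¹' J, ?_, by simpa using hrJ, by simpa using hwJ, ?_⟩
    · convert hJ.comap e.symm using 1
      ext x
      simp [e.symm_apply_eq]
    · rwa [ncard_preimage_of_injective_subset_range e.symm.injective
        (by rw [e.symm.surjective.range_eq]; exact subset_univ _)]

lemma le_ncard_add_ncard_addK23 (hG : IDSBounds G r k) {v' : V} (hv' : deg G v' ≤ 2)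
    {t : Fin 3} {S J : Set (V ⊕ (Fin 2 ⊕ Fin 3))} (hS : ∀ v ∈ S, deg (addK23 G v' t) v ≤ 2)
    (h : IsIDSetExcept (addK23 G v' t) S J) : 2 * (k + 1) + 1 ≤ J.ncard + S.ncard := by
  have := hG.finite
  have hS0 : ∀ v ∈ inl ⁻¹' S, deg G v ≤ 2 :=
    fun v hv => (deg_le_deg_addK23_inl v).trans (hS _ hv)
  have hS1 : ∀ i, inl i ∉ inr ⁻¹' S := fun i hi =>
    absurd (hS _ hi) (by have := three_le_deg_addK23_inr_inl (G := G) (v' := v') (t := t) i; omega)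
  have hK := h.preimage_inr_of_addK23
  have hcopy := min_card_le_ncard_add hK hS1
  simp only [Nat.card_eq_fintype_card, Fintype.card_fin] at hcopy
  rw [ncard_eq_ncard_preimage_inl_add J, ncard_eq_ncard_preimage_inl_add S]
  by_cases ht : inr (inr t) ∈ J
  · have hcopy_t := card_le_ncard_add_of_inr_mem hK ht
    have hIH := hG.le_ncard_add_ncard _ _ (by rintro v (rfl | hv); exacts [hv', hS0 v hv])
      h.insert_preimage_inl_of_addK23
    have := ncard_insert_le v' (inl ⁻¹' S)
    simp only [Nat.card_eq_fintype_card, Fintype.card_fin] at hcopy_t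
    omega
  · have := hG.le_ncard_add_ncard _ _ hS0 (h.preimage_inl_of_addK23 ht)
    omega

lemma exists_ncard_le_addK23 (hG : IDSBounds G r k) {v' : V} (hv' : deg G v' ≤ 2) {t : Fin 3}
    (v : V ⊕ (Fin 2 ⊕ Fin 3)) (hv : deg (addK23 G v' t) v ≤ 2) :
    ∃ J, IsIDSetExcept (addK23 G v' t) {inl r, v} J ∧ inl r ∉ J ∧ v ∉ J ∧
      J.ncard ≤ 2 * (k + 1) := by
  have := hG.finite
  rcases v with a | i | j
  · obtain ⟨J, hJ, hrJ, haJ, hcard⟩ :=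
      hG.exists_ncard_le a ((deg_le_deg_addK23_inl a).trans hv)
    refine ⟨inl '' J ∪ range (inr ∘ inl),
      (by simpa [image_insert_eq] using hJ.addK23_image_inl_union_range (v' := v') (t := t)),
      by simp [hrJ], by simp [haJ], ?_⟩
    calc _ ≤ (inl '' J).ncard + (range (inr ∘ inl : Fin 2 → V ⊕ (Fin 2 ⊕ Fin 3))).ncard :=
          ncard_union_le _ _
      _ = J.ncard + 2 := by
          rw [ncard_image_of_injective _ inl_injective,
            ncard_range_of_injective (inr_injective.comp inl_injective), Nat.card_fin]
      _ ≤ 2 * (k + 1) := by omega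
  · have := three_le_deg_addK23_inr_inl (G := G) (v' := v') (t := t) i
    omega
  · have hj : j ≠ t := by
      rintro rfl
      have := three_le_deg_addK23_inr_inr_self (G := G) (v' := v') (t := j)
      omega
    obtain ⟨J, hJ, hrJ, hv'J, hcard⟩ := hG.exists_ncard_le v' hv'
    refine ⟨inl '' J ∪ (inr ∘ inr) '' {j}ᶜ, ?_, by simp [hrJ], by simp, ?_⟩
    · rw [pair_comm] at hJ
      simpa [pair_comm] using hJ.addK23_image_inl_union_image hv'J hj
    · calc _ ≤ (inl '' J).ncard + ((inr ∘ inr) '' {j}ᶜ : Set (V ⊕ (Fin 2 ⊕ Fin 3))).ncard :=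
            ncard_union_le _ _
        _ = J.ncard + 2 := by
            rw [ncard_image_of_injective _ inl_injective,
              ncard_image_of_injective _ (inr_injective.comp inr_injective), ncard_compl,
              ncard_singleton, Nat.card_fin]
        _ ≤ 2 * (k + 1) := by omega

lemma addK23 (hG : IDSBounds G r k) {v' : V} (hv' : deg G v' ≤ 2) (t : Fin 3) :
    IDSBounds (addK23 G v' t) (inl r) (k + 1) where
  finite := have := hG.finite; inferInstance
  le_ncard_add_ncard _ _ := hG.le_ncard_add_ncard_addK23 hv'
  exists_ncard_le := hG.exists_ncard_le_addK23 hv'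

end IDSBounds

def baseEquiv : Unit ⊕ (Fin 2 ⊕ Fin 3) ≃ Fin 6 where
  toFun
    | inl () => 5
    | inr (inl i) => ⟨i, by omega⟩
    | inr (inr j) => ⟨j + 2, by omega⟩
  invFun n :=
    if h : n.val < 2 then inr (inl ⟨n, h⟩)
    else if h' : n.val < 5 then inr (inr ⟨n - 2, by omega⟩) else inl ()
  left_inv := by decide
  right_inv := by decide

def baseIso : addK23 (⊥ : SimpleGraph Unit) () 0 ≃g baseGraph where
  toEquiv := baseEquiv
  map_rel_iff' {a b} := by
    rcases a with ⟨⟩ | i | j <;> rcases b with ⟨⟩ | i' | j' <;>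
      simp [baseEquiv, baseGraph] <;> simp only [Fin.ext_iff] <;> omega

lemma idsBounds_baseGraph : IDSBounds baseGraph 5 1 :=
  ((IDSBounds.bot_unit).addK23 (by simp [deg]) 0).map baseIso

lemma FamilyBRoot.exists_idsBounds {V : Type} {G : SimpleGraph V} {r : V}
    (h : FamilyBRoot G r) : ∃ k, IDSBounds G r k := by
  induction h with
  | base => exact ⟨1, idsBounds_baseGraph⟩
  | extend _ v' hv' t ih =>
    obtain ⟨k, hk⟩ := ih
    exact ⟨k + 1, hk.addK23 hv' t⟩
  | iso e _ ih =>
    obtain ⟨k, hk⟩ := ih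
    exact ⟨k, hk.map e⟩

section addLink

variable {V : Type*} {B : SimpleGraph V} {v1 w2 : V}

lemma isIDSet_addLink_insert {J : Set V} (h : IsIDSetExcept B {v1, w2} J) (hv1 : v1 ∉ J)
    (hw2 : w2 ∉ J) : IsIDSet (addLink B v1 w2) (insert (inr ()) (inl '' J)) := by
  constructor
  · rintro (x | ⟨⟩) hx (y | ⟨⟩) hy hadj
    · exact h.1 x (by simpa using hx) y (by simpa using hy) (by simpa using hadj)
    all_goals aesop
  · rintro (b | ⟨⟩) hb
    · by_cases hb' : b = v1 ∨ b = w2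
      · exact ⟨inr (), by simp, by simpa using hb'⟩
      · obtain ⟨u, hu, hadj⟩ := h.2 b (by simpa using hb') (by simpa using hb)
        exact ⟨inl u, by simpa using hu, by simpa using hadj⟩
    · simp at hb

lemma IsIDSet.isIDSetExcept_preimage_inl_addLink {K : Set (V ⊕ Unit)}
    (h : IsIDSet (addLink B v1 w2) K) (hK : inr () ∈ K) :
    IsIDSetExcept B {v1, w2} (inl ⁻¹' K) ∧ v1 ∉ inl ⁻¹' K ∧ w2 ∉ inl ⁻¹' K := by
  refine ⟨⟨fun u hu v hv huv => h.1 _ hu _ hv (by simpa), fun z hz hzK => ?_⟩,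
    fun hv1 => h.1 _ hv1 _ hK (by simp), fun hw2 => h.1 _ hw2 _ hK (by simp)⟩
  obtain ⟨a | ⟨⟩, hu, hadj⟩ := h.2 (inl z) hzK
  · exact ⟨a, hu, by simpa using hadj⟩
  · simp_all

lemma IsIDSet.isIDSet_preimage_inl_addLink {K : Set (V ⊕ Unit)}
    (h : IsIDSet (addLink B v1 w2) K) (hK : inr () ∉ K) : IsIDSet B (inl ⁻¹' K) := by
  refine ⟨fun u hu v hv huv => h.1 _ hu _ hv (by simpa), fun z hzK => ?_⟩
  obtain ⟨a | ⟨⟩, hu, hadj⟩ := h.2 (inl z) hzK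
  · exact ⟨a, hu, by simpa using hadj⟩
  · exact absurd hu hK

variable [Finite V] {K : Set (V ⊕ Unit)}

lemma ncard_eq_ncard_preimage_inl_add_one (hK : inr () ∈ K) :
    K.ncard = (inl ⁻¹' K).ncard + 1 := by
  rw [ncard_eq_ncard_preimage_inl_add K, eq_univ_of_forall (s := inr ⁻¹' K) fun _ => hK,
    ncard_univ, Nat.card_unique]

lemma ncard_eq_ncard_preimage_inl (hK : inr () ∉ K) : K.ncard = (inl ⁻¹' K).ncard := by
  rw [ncard_eq_ncard_preimage_inl_add K,
    eq_empty_of_forall_notMem (s := inr ⁻¹' K) fun _ => hK, ncard_empty, add_zero]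

lemma exists_isIDSet_addLink_ncard_eq_iNum_of_lt {J : Set V}
    (hJ : IsIDSetExcept B {v1, w2} J) (hv1 : v1 ∉ J) (hw2 : w2 ∉ J)
    (hlt : ∀ K, IsIDSet B K → J.ncard < K.ncard) :
    ∃ I, IsIDSet (addLink B v1 w2) I ∧ I.ncard = iNum (addLink B v1 w2) ∧ inr () ∈ I := by
  obtain ⟨J₀, ⟨hJ₀, hv1₀, hw2₀⟩, hmin⟩ := exists_min_image
    {J | IsIDSetExcept B {v1, w2} J ∧ v1 ∉ J ∧ w2 ∉ J} ncard (toFinite _) ⟨J, hJ, hv1, hw2⟩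
  have hI := isIDSet_addLink_insert hJ₀ hv1₀ hw2₀
  have hIcard : (insert (inr ()) (inl '' J₀)).ncard = J₀.ncard + 1 := by
    rw [ncard_insert_of_notMem (by simp), ncard_image_of_injective _ inl_injective]
  refine ⟨_, hI, ncard_eq_iNum_of_forall_le hI fun K hK => ?_, mem_insert _ _⟩
  by_cases hv2 : inr () ∈ K
  · rw [hIcard, ncard_eq_ncard_preimage_inl_add_one hv2]
    exact Nat.succ_le_succ (hmin _ (hK.isIDSetExcept_preimage_inl_addLink hv2))
  · rw [hIcard, ncard_eq_ncard_preimage_inl hv2]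
    exact Nat.succ_le_of_lt ((hmin J ⟨hJ, hv1, hw2⟩).trans_lt
      (hlt _ (hK.isIDSet_preimage_inl_addLink hv2)))

end addLink

theorem statement15_general {V : Type} (B : SimpleGraph V) (v1 : V) (hroot : FamilyBRoot B v1)
    (w2 : V) (hdeg2 : deg B w2 = 2)
    (T : SimpleGraph (V ⊕ Unit)) (hT : T = addLink B v1 w2) :
    ∃ I : Set (V ⊕ Unit), IsIDSet T I ∧ I.ncard = iNum T ∧ Sum.inr () ∈ I := by
  subst hT
  obtain ⟨k, hk⟩ := hroot.exists_idsBounds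
  have := hk.finite
  obtain ⟨J, hJ, hv1, hw2, hcard⟩ := hk.exists_ncard_le w2 hdeg2.le
  refine exists_isIDSet_addLink_ncard_eq_iNum_of_lt hJ hv1 hw2 fun K hK => ?_
  have hlb := hk.le_ncard_add_ncard ∅ K (by simp) hK.isIDSetExcept_empty
  rw [ncard_empty] at hlb
  omega

/-- Let `B ∈ 𝓑₁` have root `v₁` (of degree 1 in `B`), let `w₂ ≠ v₁`
be a vertex of degree 2 in `B`, and let `T` be obtained from `B` by adding a new vertex
`v₂` and the two edges `v₁v₂` and `v₂w₂`. Then there exists an independent dominating set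
of `T` of minimum cardinality `i(T)` containing the vertex `v₂`. -/
theorem statement15 {V : Type} (B : SimpleGraph V) (v1 : V) (hroot : FamilyBRoot B v1)
    (hdeg1 : deg B v1 = 1) (w2 : V) (hne : w2 ≠ v1) (hdeg2 : deg B w2 = 2)
    (T : SimpleGraph (V ⊕ Unit)) (hT : T = addLink B v1 w2) :
    ∃ I : Set (V ⊕ Unit), IsIDSet T I ∧ I.ncard = iNum T ∧ Sum.inr () ∈ I :=
  statement15_general B v1 hroot w2 hdeg2 T hT

end PaperIndepDom
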